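/- No expansion rule can derive B*(a*) unless it is entailed: if A ∪ T ⊭ B*(a*), then after any application of the ⊓-, ∃₁-, ∃₂-, or ⊑-rule to A, the resulting ABox A'' still satisfies A'' ∪ T ⊭ B*(a*); in particular B*(a*) ∉ A''. -/

import Mathlib

/-! Basic syntax and semantics of the description logic EL_⊥. -/

/-- EL_⊥ concepts over concept names `C` and role names `R`. -/
inductive ELConcept (C R : Type) : Type
  | top  : ELConcept C R
  | bot  : ELConcept C R
  | atom : C → ELConcept C R
  | conj : ELConcept C R → ELConcept C R → ELConcept C R
  | ex   : R → ELConcept C R → ELConcept C R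

/-- A general concept inclusion (GCI) `C ⊑ D`. -/
abbrev GCI (C R : Type) := ELConcept C R × ELConcept C R

/-- A TBox is a set of GCIs. -/
abbrev TBox (C R : Type) := Set (GCI C R)

/-- ABox assertions: concept assertions `C(a)` and role assertions `r(a,b)`. -/
inductive Assertion (C R Ind : Type) : Type
  | concept : ELConcept C R → Ind → Assertion C R Ind
  | role    : R → Ind → Ind → Assertion C R Ind

/-- An ABox is a set of assertions. -/
abbrev ABox (C R Ind : Type) := Set (Assertion C R Ind)

/-- An interpretation with domain `δ`, interpreting concept names, role names
and individual names. -/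
structure Interp (C R Ind δ : Type) where
  atomI : C → Set δ
  roleI : R → Set (δ × δ)
  indI  : Ind → δ

/-- Semantics of concepts. -/
def Interp.sem {C R Ind δ : Type} (I : Interp C R Ind δ) : ELConcept C R → Set δ
  | .top => Set.univ
  | .bot => ∅
  | .atom A => I.atomI A
  | .conj c d => I.sem c ∩ I.sem d
  | .ex r c => {x | ∃ y, (x, y) ∈ I.roleI r ∧ y ∈ I.sem c}

/-- `I` satisfies a GCI `C ⊑ D` iff `C^I ⊆ D^I`. -/
def Interp.satGCI {C R Ind δ : Type} (I : Interp C R Ind δ) (g : GCI C R) : Prop :=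
  I.sem g.1 ⊆ I.sem g.2

/-- `I` is a model of a TBox. -/
def Interp.modelT {C R Ind δ : Type} (I : Interp C R Ind δ) (T : TBox C R) : Prop :=
  ∀ g ∈ T, I.satGCI g

/-- `I` satisfies an assertion. -/
def Interp.satA {C R Ind δ : Type} (I : Interp C R Ind δ) : Assertion C R Ind → Prop
  | .concept c a => I.indI a ∈ I.sem c
  | .role r a b => (I.indI a, I.indI b) ∈ I.roleI r

/-- `I` is a model of an ABox. -/
def Interp.modelA {C R Ind δ : Type} (I : Interp C R Ind δ) (A : ABox C R Ind) : Prop :=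
  ∀ ax ∈ A, I.satA ax

/-- `I` is a model of the ontology `O = A ∪ T`. -/
def Interp.modelO {C R Ind δ : Type} (I : Interp C R Ind δ) (A : ABox C R Ind)
    (T : TBox C R) : Prop :=
  I.modelA A ∧ I.modelT T

/-- TBox entailment of a GCI: every model of `T` satisfies the GCI. -/
def entailsT {C R : Type} (T : TBox C R) (g : GCI C R) : Prop :=
  ∀ (Ind δ : Type) (I : Interp C R Ind δ), I.modelT T → I.satGCI g

/-- The ontology `A ∪ T` is consistent iff it has a model. -/
def consistentO {C R Ind : Type} (A : ABox C R Ind) (T : TBox C R) : Prop :=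
  ∃ (δ : Type) (I : Interp C R Ind δ), I.modelO A T

/-- Entailment of an assertion from an ontology `A ∪ T`. -/
def entailsO {C R Ind : Type} (A : ABox C R Ind) (T : TBox C R)
    (ax : Assertion C R Ind) : Prop :=
  ∀ (δ : Type) (I : Interp C R Ind δ), I.modelO A T → I.satA ax

/-- Occurrence of a concept name in a concept. -/
def occursName {C R : Type} (B : C) : ELConcept C R → Prop
  | .atom A => A = B
  | .conj c d => occursName B c ∨ occursName B d
  | .ex _ c => occursName B c
  | _ => False

/-- Occurrence of a concept name in a TBox. -/
def occursNameT {C R : Type} (B : C) (T : TBox C R) : Prop :=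
  ∃ g ∈ T, occursName B g.1 ∨ occursName B g.2

/-- A concept is ⊥-free (i.e. an EL concept). -/
def botFree {C R : Type} : ELConcept C R → Prop
  | .bot => False
  | .conj c d => botFree c ∧ botFree d
  | .ex _ c => botFree c
  | _ => True

/-- The top-level conjuncts `At(D)` of a concept `D`: the conjuncts of `D`
if `D` is a conjunction, and `{D}` otherwise. -/
def At {C R : Type} : ELConcept C R → Set (ELConcept C R)
  | .conj c d => At c ∪ At d
  | c => {c}

/-- A concept that is a concept name or `⊤`. -/
def atomicOrTop {C R : Type} (c : ELConcept C R) : Prop :=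
  c = ELConcept.top ∨ ∃ A, c = ELConcept.atom A

/-- A basic concept: a concept name, `⊤`, or `⊥`. -/
def isBasic {C R : Type} (c : ELConcept C R) : Prop :=
  c = ELConcept.top ∨ c = ELConcept.bot ∨ ∃ A, c = ELConcept.atom A

/-- Axioms of a normalized EL_⊥ TBox: `A ⊑ B`, `A₁ ⊓ A₂ ⊑ B`, `∃r.A ⊑ B`,
or `A ⊑ ∃r.B`, with `A, A₁, A₂, B` concept names, `⊤`, or `⊥`. -/
def normalizedAxiom {C R : Type} (g : GCI C R) : Prop :=
  (isBasic g.1 ∧ isBasic g.2) ∨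
  (∃ A1 A2, isBasic A1 ∧ isBasic A2 ∧ g.1 = ELConcept.conj A1 A2 ∧ isBasic g.2) ∨
  (∃ r A, isBasic A ∧ g.1 = ELConcept.ex r A ∧ isBasic g.2) ∨
  (∃ r B, isBasic B ∧ g.2 = ELConcept.ex r B ∧ isBasic g.1)

/-- A normalized TBox. -/
def normalized {C R : Type} (T : TBox C R) : Prop :=
  ∀ g ∈ T, normalizedAxiom g

/-- The left-hand side `L` of a TBox axiom is witnessed at `a` in `A`. -/
def witnessed {C R Ind : Type} (A : ABox C R Ind) (L : ELConcept C R) (a : Ind) : Prop :=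
  Assertion.concept L a ∈ A ∨
  ∃ c d, L = ELConcept.conj c d ∧ Assertion.concept c a ∈ A ∧ Assertion.concept d a ∈ A

/-- An assertion mentions the individual `d`. -/
def Assertion.mentions {C R Ind : Type} (d : Ind) : Assertion C R Ind → Prop
  | .concept _ a => a = d
  | .role _ a b => a = d ∨ b = d

/-- The individual `d` occurs in the ABox `A`. -/
def mentionsA {C R Ind : Type} (d : Ind) (A : ABox C R Ind) : Prop :=
  ∃ ax ∈ A, ax.mentions d

/-- The expansion rules other than the ∃₂-rule: the ⊓-rule, the ∃₁-rule and
the ⊑-rule. -/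
inductive StepCore {C R Ind : Type} (T : TBox C R) : ABox C R Ind → ABox C R Ind → Prop
  | conjRule {A : ABox C R Ind} {D c : ELConcept C R} {a : Ind} :
      Assertion.concept D a ∈ A → c ∈ At D → Assertion.concept c a ∉ A →
      StepCore T A (insert (Assertion.concept c a) A)
  | ex1 {A : ABox C R Ind} {r : R} {a b : Ind} {B : ELConcept C R} :
      Assertion.role r a b ∈ A → Assertion.concept B b ∈ A → atomicOrTop B →
      Assertion.concept (ELConcept.ex r B) a ∉ A →
      StepCore T A (insert (Assertion.concept (ELConcept.ex r B) a) A)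
  | sub {A : ABox C R Ind} {g : GCI C R} {a : Ind} :
      g ∈ T → witnessed A g.1 a → Assertion.concept g.2 a ∉ A →
      StepCore T A (insert (Assertion.concept g.2 a) A)

/-- The ∃₂-rule, parameterized by a guard `good` describing when an existing
individual may be reused as a successor. A fresh individual is introduced
only if no existing individual can be reused. -/
inductive StepEx {C R Ind : Type} (good : ABox C R Ind → Prop) :
    ABox C R Ind → ABox C R Ind → Prop
  | reuse {A : ABox C R Ind} {r : R} {a c : Ind} {E : ELConcept C R} :
      Assertion.concept (ELConcept.ex r E) a ∈ A →
      (¬ ∃ b, Assertion.role r a b ∈ A ∧ Assertion.concept E b ∈ A) →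
      good (insert (Assertion.role r a c) (insert (Assertion.concept E c) A)) →
      StepEx good A (insert (Assertion.role r a c) (insert (Assertion.concept E c) A))
  | fresh {A : ABox C R Ind} {r : R} {a d : Ind} {E : ELConcept C R} :
      Assertion.concept (ELConcept.ex r E) a ∈ A →
      (¬ ∃ b, Assertion.role r a b ∈ A ∧ Assertion.concept E b ∈ A) →
      (¬ ∃ c, good (insert (Assertion.role r a c) (insert (Assertion.concept E c) A))) →
      ¬ mentionsA d A →
      StepEx good A (insert (Assertion.role r a d) (insert (Assertion.concept E d)
        (insert (Assertion.concept ELConcept.top d) A)))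

/-- One application of any expansion rule. -/
def Step {C R Ind : Type} (T : TBox C R) (good : ABox C R Ind → Prop)
    (A A' : ABox C R Ind) : Prop :=
  StepCore T A A' ∨ StepEx good A A'

/-- One application of an expansion rule under the strategy that the ∃₂-rule
is applied only when no other rule is applicable. -/
def StepPr {C R Ind : Type} (T : TBox C R) (good : ABox C R Ind → Prop)
    (A A' : ABox C R Ind) : Prop :=
  StepCore T A A' ∨ ((¬ ∃ B, StepCore T A B) ∧ StepEx good A A')

/-- An ABox is complete if no expansion rule is applicable. -/
def completeA {C R Ind : Type} (T : TBox C R) (good : ABox C R Ind → Prop)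
    (A' : ABox C R Ind) : Prop :=
  ¬ ∃ A'', Step T good A' A''

/-- An ABox is clash-free if it contains no assertion `⊥(a)`. -/
def clashFree {C R Ind : Type} (A' : ABox C R Ind) : Prop :=
  ∀ a, Assertion.concept ELConcept.bot a ∉ A'

/-- The interpretation induced from an ABox: `a^I = a`,
`A^I = {a | A(a) ∈ A'}`, `r^I = {(a,b) | r(a,b) ∈ A'}`. -/
def induced {C R Ind : Type} (A' : ABox C R Ind) : Interp C R Ind Ind where
  atomI := fun B => {a | Assertion.concept (ELConcept.atom B) a ∈ A'}
  roleI := fun r => {p | Assertion.role r p.1 p.2 ∈ A'}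
  indI := id


/-! The ⊓-, ∃₁- and ⊑-rules only add assertions that already hold in every model of `A ∪ T`,
so a countermodel to `B*(a*)` for `A ∪ T` is one for the expanded ABox as well. For the
∃₂-rule, a reused individual is admitted only when the result does not entail `B*(a*)`; a fresh
individual `d` can be sent to an `r`-successor witnessing `∃r.E` in the countermodel without
changing anything else, and `a*`, which occurs in `A`, is not `d`. -/

namespace Interp

variable {C R Ind δ : Type}

theorem sem_congr {Ind' : Type} {I : Interp C R Ind δ} {J : Interp C R Ind' δ}
    (ha : I.atomI = J.atomI) (hr : I.roleI = J.roleI) : I.sem = J.sem := by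
  funext c
  induction c with
  | top => rfl
  | bot => rfl
  | atom A => simp only [sem, ha]
  | conj c d ihc ihd => simp only [sem, ihc, ihd]
  | ex r c ih => simp only [sem, hr, ih]

theorem sem_subset_of_mem_At (I : Interp C R Ind δ) {D c : ELConcept C R} (hc : c ∈ At D) :
    I.sem D ⊆ I.sem c := by
  induction D with
  | conj D₁ D₂ ih₁ ih₂ =>
    rcases hc with hc | hc
    · exact fun x hx => ih₁ hc hx.1
    · exact fun x hx => ih₂ hc hx.2
  | _ => rw [show c = _ from hc]

theorem mem_sem_of_witnessed {I : Interp C R Ind δ} {A : ABox C R Ind} (hI : I.modelA A)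
    {L : ELConcept C R} {a : Ind} (hw : witnessed A L a) : I.indI a ∈ I.sem L := by
  rcases hw with hL | ⟨c, d, rfl, hc, hd⟩
  · exact hI _ hL
  · exact ⟨hI _ hc, hI _ hd⟩

theorem modelA_insert {I : Interp C R Ind δ} {A : ABox C R Ind} {ax : Assertion C R Ind}
    (hax : I.satA ax) (hA : I.modelA A) : I.modelA (insert ax A) := by
  rintro ax' (rfl | hax')
  exacts [hax, hA ax' hax']

def updateInd [DecidableEq Ind] (I : Interp C R Ind δ) (d : Ind) (y : δ) : Interp C R Ind δ :=
  { I with indI := Function.update I.indI d y }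

variable [DecidableEq Ind] (I : Interp C R Ind δ) (d : Ind) (y : δ)

@[simp]
theorem sem_updateInd : (I.updateInd d y).sem = I.sem :=
  sem_congr rfl rfl

theorem updateInd_indI_of_ne {a : Ind} (ha : a ≠ d) : (I.updateInd d y).indI a = I.indI a :=
  Function.update_of_ne ha _ _

@[simp]
theorem updateInd_roleI : (I.updateInd d y).roleI = I.roleI :=
  rfl

@[simp]
theorem updateInd_indI_self : (I.updateInd d y).indI d = y :=
  Function.update_self _ _ _

@[simp]
theorem modelT_updateInd {T : TBox C R} : (I.updateInd d y).modelT T ↔ I.modelT T := by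
  simp only [modelT, satGCI, sem_updateInd]

theorem satA_updateInd_of_not_mentions {ax : Assertion C R Ind} (hd : ¬ ax.mentions d) :
    (I.updateInd d y).satA ax ↔ I.satA ax := by
  cases ax with
  | concept c a =>
    simp only [satA, sem_updateInd, I.updateInd_indI_of_ne d y (a := a) hd]
  | role r a b =>
    simp only [Assertion.mentions, not_or] at hd
    simp only [satA, I.updateInd_indI_of_ne d y hd.1, I.updateInd_indI_of_ne d y hd.2]
    rfl

theorem modelA_updateInd_of_not_mentionsA {A : ABox C R Ind} (hd : ¬ mentionsA d A)
    (hI : I.modelA A) : (I.updateInd d y).modelA A := fun ax hax =>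
  (I.satA_updateInd_of_not_mentions d y fun h => hd ⟨ax, hax, h⟩).2 (hI ax hax)

end Interp

variable {C R Ind : Type}

theorem entailsO_of_mem {A : ABox C R Ind} {T : TBox C R} {ax : Assertion C R Ind}
    (hax : ax ∈ A) : entailsO A T ax :=
  fun _ _ hI => hI.1 ax hax

theorem StepCore.modelA {T : TBox C R} {A A' : ABox C R Ind} (hstep : StepCore T A A')
    {δ : Type} {I : Interp C R Ind δ} (hI : I.modelO A T) : I.modelA A' := by
  cases hstep with
  | conjRule hD hc _ => exact I.modelA_insert (I.sem_subset_of_mem_At hc (hI.1 _ hD)) hI.1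
  | ex1 hr hB _ _ => exact I.modelA_insert ⟨_, hI.1 _ hr, hI.1 _ hB⟩ hI.1
  | sub hg hw _ => exact I.modelA_insert (hI.2 _ hg (Interp.mem_sem_of_witnessed hI.1 hw)) hI.1

theorem StepCore.not_entailsO {T : TBox C R} {A A' : ABox C R Ind} (hstep : StepCore T A A')
    {ax : Assertion C R Ind} (hne : ¬ entailsO A T ax) : ¬ entailsO A' T ax := by
  intro hent
  exact hne fun δ I hI => hent δ I ⟨hstep.modelA hI, hI.2⟩

theorem StepEx.not_entailsO {T : TBox C R} {good : ABox C R Ind → Prop}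
    {A A' : ABox C R Ind} (hstep : StepEx good A A') {c : ELConcept C R} {b : Ind}
    (hgood : ∀ B, good B → ¬ entailsO B T (.concept c b)) (hb : mentionsA b A)
    (hne : ¬ entailsO A T (.concept c b)) : ¬ entailsO A' T (.concept c b) := by
  classical
  cases hstep with
  | reuse _ _ hB => exact hgood _ hB
  | @fresh r a d E hex _ _ hd =>
    intro hent
    simp only [entailsO, not_forall] at hne
    obtain ⟨δ, I, hI, hcb⟩ := hne
    obtain ⟨y, hay, hy⟩ := hI.1 _ hex
    have had : a ≠ d := fun h => hd ⟨_, hex, h⟩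
    have hbd : b ≠ d := fun h => hd (h ▸ hb)
    have hJ : (I.updateInd d y).modelA A := I.modelA_updateInd_of_not_mentionsA d y hd hI.1
    refine hcb ?_
    rw [← I.satA_updateInd_of_not_mentions d y (ax := .concept c b) hbd]
    refine hent δ (I.updateInd d y) ⟨?_, (I.modelT_updateInd d y).2 hI.2⟩
    refine Interp.modelA_insert ?_ (Interp.modelA_insert ?_ (Interp.modelA_insert trivial hJ))
    · simpa only [Interp.satA, I.updateInd_indI_of_ne d y had, Interp.updateInd_indI_self,
        Interp.updateInd_roleI] using hay
    · simpa only [Interp.satA, Interp.updateInd_indI_self, Interp.sem_updateInd] using hy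

theorem Step.not_entailsO {T : TBox C R} {good : ABox C R Ind → Prop}
    {A A' : ABox C R Ind} (hstep : Step T good A A') {c : ELConcept C R} {b : Ind}
    (hgood : ∀ B, good B → ¬ entailsO B T (.concept c b)) (hb : mentionsA b A)
    (hne : ¬ entailsO A T (.concept c b)) : ¬ entailsO A' T (.concept c b) :=
  hstep.elim (fun h => h.not_entailsO hne) (fun h => h.not_entailsO hgood hb hne)

theorem stmt12_general {C R Ind : Type} (T : TBox C R) (A A'' : ABox C R Ind)
    (Cc : ELConcept C R) (Bstar : C) (astar : Ind)
    (hA : A = {Assertion.concept Cc astar})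
    (hne : ¬ entailsO A T (Assertion.concept (ELConcept.atom Bstar) astar))
    (hstep : Step T
      (fun B => consistentO B T ∧
        ¬ entailsO B T (Assertion.concept (ELConcept.atom Bstar) astar)) A A'') :
    ¬ entailsO A'' T (Assertion.concept (ELConcept.atom Bstar) astar) ∧
      Assertion.concept (ELConcept.atom Bstar) astar ∉ A'' := by
  have hastar : mentionsA astar A := ⟨.concept Cc astar, hA ▸ rfl, rfl⟩
  have hne'' := hstep.not_entailsO (fun _ hB => hB.2) hastar hne
  exact ⟨hne'', fun hmem => hne'' (entailsO_of_mem hmem)⟩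

/-- No expansion rule can derive `B*(a*)` unless it is entailed:
if `A ∪ T ⊭ B*(a*)`, then after any rule application (with the ∃₂-rule reusing
individuals only when consistent and not entailing `B*(a*)`), the resulting
ABox `A''` still satisfies `A'' ∪ T ⊭ B*(a*)`; in particular `B*(a*) ∉ A''`. -/
theorem stmt12 {C R Ind : Type} (T : TBox C R) (A A'' : ABox C R Ind)
    (Cc D : ELConcept C R) (Bstar : C) (astar : Ind)
    (hA : A = {Assertion.concept Cc astar})
    (hmem : (D, ELConcept.atom Bstar) ∈ T)
    (hne : ¬ entailsO A T (Assertion.concept (ELConcept.atom Bstar) astar))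
    (hstep : Step T
      (fun B => consistentO B T ∧
        ¬ entailsO B T (Assertion.concept (ELConcept.atom Bstar) astar)) A A'') :
    ¬ entailsO A'' T (Assertion.concept (ELConcept.atom Bstar) astar) ∧
      Assertion.concept (ELConcept.atom Bstar) astar ∉ A'' :=
  stmt12_general T A A'' Cc Bstar astar hA hne hstep
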